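/- arXiv:2309.07571 — 4 statements merged into one kernel-verified Lean document; each statement's English description precedes it below -/
import Mathlib

section
/- Let Y, U be locally compact Polish spaces, μ a probability measure on Y. Suppose (νₙ) is a sequence of probability measures on Y × U of the form νₙ(dy,du) = λₙ(y)(du) μ(dy) for stochastic kernels λₙ, and suppose the family {νₙ} is tight. Suppose moreover ∫∫ f(y)(u) λₙ(y)(du) μ(dy) → ∫∫ f(y)(u) λ(y)(du) μ(dy) for all f ∈ L₁(μ, C₀(U)), where λ : Y → P_{≤1}(U) takes values in sub-probability measures. Then λ(y) is a probability measure for μ-almost every y. -/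
/-!
Tightness gives, for each ε > 0, a compact `K ⊆ Y × U` carrying mass at least `1 - ε` under
every `νₙ`. A function `g ∈ C₀(U)` with `0 ≤ g ≤ 1` and `g = 1` on the projection of `K` is a
valid constant test function, so `1 - ε ≤ ∫∫ g dλₙ dμ → ∫∫ g dλ dμ ≤ ∫ λ(y)(U) dμ`. Hence
`∫ λ(y)(U) dμ = 1`, and since `λ(y)(U) ≤ 1` pointwise, equality holds almost everywhere.
-/

open MeasureTheory Filter Topology ProbabilityTheory Set

namespace MeasureTheory.Measure

variable {α β : Type*} [MeasurableSpace α] [MeasurableSpace β]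

lemma bind_map_prodMk_eq_compProd (μ : Measure α) [SFinite μ] (κ : Kernel α β)
    [IsSFiniteKernel κ] : μ.bind (fun a ↦ (κ a).map (Prod.mk a)) = μ ⊗ₘ κ := by
  have hκ : (fun a ↦ (κ a).map (Prod.mk a)) = Kernel.id ×ₖ κ := by
    ext1 a
    rw [Kernel.prod_apply, Kernel.id_apply, dirac_prod]
  ext s hs
  rw [bind_apply hs (hκ ▸ (Kernel.id ×ₖ κ).measurable).aemeasurable, compProd_apply hs]
  simp_rw [map_apply measurable_prodMk_left hs]

end MeasureTheory.Measure

lemma one_sub_le_integral_of_indicator_le {X : Type*} [MeasurableSpace X] {ν : Measure X}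
    [IsProbabilityMeasure ν] {s : Set X} (hs : MeasurableSet s) {f : X → ℝ}
    (hf : Integrable f ν) (hsf : s.indicator 1 ≤ f) {ε : ℝ} (hε0 : 0 ≤ ε)
    (hε : ν sᶜ ≤ ENNReal.ofReal ε) :
    1 - ε ≤ ∫ x, f x ∂ν := by
  have hcompl : ν.real sᶜ ≤ ε := ENNReal.toReal_le_of_le_ofReal hε0 hε
  calc 1 - ε ≤ ν.real s := by rw [probReal_compl_eq_one_sub hs] at hcompl; linarith
    _ = ∫ x, s.indicator 1 x ∂ν := (integral_indicator_one hs).symm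
    _ ≤ ∫ x, f x ∂ν := integral_mono ((integrable_const 1).indicator hs) hf hsf

lemma ZeroAtInftyContinuousMap.exists_eqOn_one_of_isCompact {U : Type*} [TopologicalSpace U]
    [T2Space U] [LocallyCompactSpace U] {C : Set U} (hC : IsCompact C) :
    ∃ g : ZeroAtInftyContinuousMap U ℝ, EqOn g 1 C ∧ ∀ u, g u ∈ Icc 0 1 := by
  obtain ⟨g, hg1, -, hgc, hg01⟩ :=
    exists_continuous_one_zero_of_isCompact hC isClosed_empty (disjoint_empty _)
  exact ⟨⟨g, hgc.is_zero_at_infty⟩, hg1, hg01⟩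

lemma integral_le_measureReal_univ {U : Type*} [MeasurableSpace U] {m : Measure U}
    [IsFiniteMeasure m] {g : U → ℝ} (hg : Integrable g m) (hg1 : ∀ u, g u ≤ 1) :
    ∫ u, g u ∂m ≤ m.real univ := by
  simpa using integral_mono hg (integrable_const 1) hg1

lemma ae_eq_one_of_le_one_of_one_le_integral {X : Type*} [MeasurableSpace X] {μ : Measure X}
    [IsProbabilityMeasure μ] {F : X → ℝ} (hF : Integrable F μ) (hF1 : ∀ x, F x ≤ 1)
    (h : 1 ≤ ∫ x, F x ∂μ) : ∀ᵐ x ∂μ, F x = 1 := by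
  have hle : ∫ x, F x ∂μ ≤ ∫ _, (1 : ℝ) ∂μ := integral_mono hF (integrable_const 1) hF1
  refine (integral_eq_iff_of_ae_le hF (integrable_const 1) (ae_of_all _ hF1)).1 (hle.antisymm ?_)
  simpa using h

section

variable {Y U : Type*} [TopologicalSpace Y] [MeasurableSpace Y]
  [TopologicalSpace U] [MeasurableSpace U] [OpensMeasurableSpace U] [T2Space U]

lemma one_sub_le_integral_integral_of_compProd_compl_le (μ : Measure Y) [IsProbabilityMeasure μ]
    (κ : Kernel Y U) [IsMarkovKernel κ] {K : Set (Y × U)} (hK : IsCompact K) {ε : ℝ} (hε : 0 ≤ ε)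
    (hKε : (μ ⊗ₘ κ) Kᶜ ≤ ENNReal.ofReal ε) {g : ZeroAtInftyContinuousMap U ℝ}
    (hg1 : EqOn g 1 (Prod.snd '' K)) (hg0 : ∀ u, 0 ≤ g u) :
    1 - ε ≤ ∫ y, ∫ u, g u ∂κ y ∂μ := by
  have hC : MeasurableSet (Prod.snd '' K) := (hK.image continuous_snd).isClosed.measurableSet
  have hKC : K ⊆ univ ×ˢ (Prod.snd '' K) := fun p hp ↦ ⟨trivial, p, hp, rfl⟩
  have hgi : Integrable (fun p : Y × U ↦ g p.2) (μ ⊗ₘ κ) :=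
    (g.toBCF.integrable _).comp_measurable measurable_snd
  rw [← Measure.integral_compProd hgi]
  refine one_sub_le_integral_of_indicator_le (MeasurableSet.univ.prod hC) hgi (fun p ↦ ?_) hε
    ((measure_mono (compl_subset_compl.2 hKC)).trans hKε)
  by_cases hp : p.2 ∈ Prod.snd '' K
  · simp [indicator_of_mem (show p ∈ univ ×ˢ (Prod.snd '' K) from ⟨trivial, hp⟩), hg1 hp]
  · simp [indicator_of_notMem (show p ∉ univ ×ˢ (Prod.snd '' K) from fun h ↦ hp h.2), hg0]

end

theorem stmt_13_general {Y : Type*} [TopologicalSpace Y] [MeasurableSpace Y]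
    {U : Type*} [TopologicalSpace U] [PolishSpace U] [LocallyCompactSpace U]
    [MeasurableSpace U] [BorelSpace U]
    (μ : Measure Y) [IsProbabilityMeasure μ]
    (lamSeq : ℕ → Y → Measure U)
    (hmeasn : ∀ n, Measurable (lamSeq n))
    (hprobn : ∀ n y, IsProbabilityMeasure (lamSeq n y))
    (ν : ℕ → Measure (Y × U))
    (hν : ∀ n, ν n = μ.bind fun y => (lamSeq n y).map (Prod.mk y))
    (htight : ∀ ε > (0 : ℝ), ∃ K : Set (Y × U), IsCompact K ∧
      ∀ n, ν n Kᶜ ≤ ENNReal.ofReal ε)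
    (lam : Y → Measure U)
    (hlam_meas : Measurable lam)
    (hlam_sub : ∀ y, lam y Set.univ ≤ 1)
    (hconv : ∀ f : Y → ZeroAtInftyContinuousMap U ℝ,
      AEStronglyMeasurable f μ → Integrable (fun y => ‖f y‖) μ →
      Tendsto (fun n => ∫ y, ∫ u, f y u ∂(lamSeq n y) ∂μ) atTop
        (𝓝 (∫ y, ∫ u, f y u ∂(lam y) ∂μ))) :
    ∀ᵐ y ∂μ, lam y Set.univ = 1 := by
  have (y : Y) : IsFiniteMeasure (lam y) := ⟨(hlam_sub y).trans_lt ENNReal.one_lt_top⟩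
  let κ (n : ℕ) : Kernel Y U := ⟨lamSeq n, hmeasn n⟩
  have (n : ℕ) : IsMarkovKernel (κ n) := ⟨hprobn n⟩
  have hνκ (n : ℕ) : ν n = μ ⊗ₘ κ n := (hν n).trans (Measure.bind_map_prodMk_eq_compProd μ (κ n))
  have hF1 (y : Y) : (lam y).real univ ≤ 1 := ENNReal.toReal_le_of_le_ofReal zero_le_one
    (ENNReal.ofReal_one ▸ hlam_sub y)
  have hFi : Integrable (fun y ↦ (lam y).real univ) μ :=
    .of_bound ((Measure.measurable_coe .univ).comp hlam_meas).ennreal_toReal.aestronglyMeasurable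
      1 (ae_of_all _ fun y ↦ (abs_of_nonneg measureReal_nonneg).trans_le (hF1 y))
  have hlower (ε : ℝ) (hε : 0 < ε) : 1 - ε ≤ ∫ y, (lam y).real univ ∂μ := by
    obtain ⟨K, hK, hKν⟩ := htight ε hε
    obtain ⟨g, hg1, hg01⟩ := ZeroAtInftyContinuousMap.exists_eqOn_one_of_isCompact
      (hK.image continuous_snd)
    have hn (n : ℕ) : 1 - ε ≤ ∫ y, ∫ u, g u ∂lamSeq n y ∂μ :=
      one_sub_le_integral_integral_of_compProd_compl_le μ (κ n) hK hε.le
        (hνκ n ▸ hKν n) hg1 fun u ↦ (hg01 u).1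
    refine (ge_of_tendsto' (hconv (fun _ ↦ g) aestronglyMeasurable_const
      (integrable_const _)) hn).trans (integral_mono_of_nonneg ?_ hFi (ae_of_all _ fun y ↦ ?_))
    · exact ae_of_all _ fun y ↦ integral_nonneg fun u ↦ (hg01 u).1
    · exact integral_le_measureReal_univ (g.toBCF.integrable _) fun u ↦ (hg01 u).2
  filter_upwards [ae_eq_one_of_le_one_of_one_le_integral hFi hF1 (le_of_forall_sub_le hlower)]
    with y hy
  exact (ENNReal.toReal_eq_one_iff _).1 hy

theorem stmt_13 {Y : Type*} [TopologicalSpace Y] [PolishSpace Y] [LocallyCompactSpace Y]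
    [MeasurableSpace Y] [BorelSpace Y]
    {U : Type*} [TopologicalSpace U] [PolishSpace U] [LocallyCompactSpace U]
    [MeasurableSpace U] [BorelSpace U]
    (μ : Measure Y) [IsProbabilityMeasure μ]
    (lamSeq : ℕ → Y → Measure U)
    (hmeasn : ∀ n, Measurable (lamSeq n))
    (hprobn : ∀ n y, IsProbabilityMeasure (lamSeq n y))
    (ν : ℕ → Measure (Y × U))
    (hν : ∀ n, ν n = μ.bind fun y => (lamSeq n y).map (Prod.mk y))
    (htight : ∀ ε > (0 : ℝ), ∃ K : Set (Y × U), IsCompact K ∧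
      ∀ n, ν n Kᶜ ≤ ENNReal.ofReal ε)
    (lam : Y → Measure U)
    (hlam_meas : Measurable lam)
    (hlam_sub : ∀ y, lam y Set.univ ≤ 1)
    (hconv : ∀ f : Y → ZeroAtInftyContinuousMap U ℝ,
      AEStronglyMeasurable f μ → Integrable (fun y => ‖f y‖) μ →
      Tendsto (fun n => ∫ y, ∫ u, f y u ∂(lamSeq n y) ∂μ) atTop
        (𝓝 (∫ y, ∫ u, f y u ∂(lam y) ∂μ))) :
    ∀ᵐ y ∂μ, lam y Set.univ = 1 :=
  stmt_13_general μ lamSeq hmeasn hprobn ν hν htight lam hlam_meas hlam_sub hconv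
end

section
/- Let E₁, E₂, E₃ be Polish spaces, φ : E₁ × E₂ × E₃ → [0,∞) measurable and in class IC(E₁,E₂), meaning: for every M > 0 and compact K ⊆ E₁ there is a compact L ⊆ E₂ with inf_{K × Lᶜ × E₃} φ ≥ M. Let m > 0 and let F₁ ⊆ P(E₁) be tight. Define F = { ν ∈ P(E₁ × E₂ × E₃) : Proj_{E₁}(ν) ∈ F₁ and ∫ φ dν ≤ m }. Then the set of projections Proj_{E₁ × E₂}(F) is a tight family of probability measures on E₁ × E₂. -/
open MeasureTheory

theorem stmt_14 {E₁ E₂ E₃ : Type*}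
    [TopologicalSpace E₁] [PolishSpace E₁] [MeasurableSpace E₁] [BorelSpace E₁]
    [TopologicalSpace E₂] [PolishSpace E₂] [MeasurableSpace E₂] [BorelSpace E₂]
    [TopologicalSpace E₃] [PolishSpace E₃] [MeasurableSpace E₃] [BorelSpace E₃]
    (φ : E₁ × E₂ × E₃ → ℝ) (hφmeas : Measurable φ) (hφ0 : ∀ p, 0 ≤ φ p)
    (hIC : ∀ M > (0 : ℝ), ∀ K : Set E₁, IsCompact K →
      ∃ L : Set E₂, IsCompact L ∧
        ∀ e₁ ∈ K, ∀ e₂ ∉ L, ∀ e₃ : E₃, M ≤ φ (e₁, e₂, e₃))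
    (m : ℝ) (hm : 0 < m)
    (F₁ : Set (Measure E₁)) (hF₁prob : ∀ ρ ∈ F₁, IsProbabilityMeasure ρ)
    (hF₁tight : ∀ ε > (0 : ℝ), ∃ K : Set E₁, IsCompact K ∧
      ∀ ρ ∈ F₁, ρ Kᶜ ≤ ENNReal.ofReal ε)
    (F : Set (Measure (E₁ × E₂ × E₃)))
    (hF : F = {ν | IsProbabilityMeasure ν ∧ ν.map (fun p => p.1) ∈ F₁ ∧
      ∫⁻ p, ENNReal.ofReal (φ p) ∂ν ≤ ENNReal.ofReal m}) :
    ∀ ε > (0 : ℝ), ∃ K : Set (E₁ × E₂), IsCompact K ∧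
      ∀ ν ∈ F, ν.map (fun p => (p.1, p.2.1)) Kᶜ ≤ ENNReal.ofReal ε := by
  intro ε hε
  obtain ⟨K₁, hK₁c, hK₁⟩ := hF₁tight (ε / 2) (by linarith)
  set M : ℝ := 2 * m / ε with hMdef
  have hMpos : 0 < M := by positivity
  obtain ⟨L, hLc, hL⟩ := hIC M hMpos K₁ hK₁c
  refine ⟨K₁ ×ˢ L, hK₁c.prod hLc, ?_⟩
  intro ν hν
  rw [hF] at hν
  obtain ⟨hνprob, hν1, hνint⟩ := hν
  have hmeas_pr : Measurable (fun p : E₁ × E₂ × E₃ => (p.1, p.2.1)) :=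
    measurable_fst.prodMk (measurable_snd.fst)
  rw [Measure.map_apply hmeas_pr ((hK₁c.prod hLc).isClosed.measurableSet.compl)]
  have hsub : (fun p : E₁ × E₂ × E₃ => (p.1, p.2.1)) ⁻¹' (K₁ ×ˢ L)ᶜ ⊆
      {p : E₁ × E₂ × E₃ | p.1 ∉ K₁} ∪ {p : E₁ × E₂ × E₃ | p.1 ∈ K₁ ∧ p.2.1 ∉ L} := by
    intro p hp
    simp only [Set.mem_preimage, Set.mem_compl_iff, Set.mem_prod, not_and_or] at hp
    by_cases h1 : p.1 ∈ K₁
    · exact Or.inr ⟨h1, hp.resolve_left (not_not_intro h1)⟩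
    · exact Or.inl h1
  have h1 : ν {p : E₁ × E₂ × E₃ | p.1 ∉ K₁} ≤ ENNReal.ofReal (ε / 2) := by
    have heq : ν {p : E₁ × E₂ × E₃ | p.1 ∉ K₁} = ν.map (fun p => p.1) K₁ᶜ := by
      rw [Measure.map_apply measurable_fst hK₁c.isClosed.measurableSet.compl]
      rfl
    rw [heq]
    exact hK₁ _ hν1
  have hAmeas : MeasurableSet {p : E₁ × E₂ × E₃ | p.1 ∈ K₁ ∧ p.2.1 ∉ L} := by
    exact (measurable_fst hK₁c.isClosed.measurableSet).inter
      (measurable_snd.fst hLc.isClosed.measurableSet.compl)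
  have h2 : ν {p : E₁ × E₂ × E₃ | p.1 ∈ K₁ ∧ p.2.1 ∉ L} ≤ ENNReal.ofReal (ε / 2) := by
    set A := {p : E₁ × E₂ × E₃ | p.1 ∈ K₁ ∧ p.2.1 ∉ L} with hA
    have key : ENNReal.ofReal M * ν A ≤ ENNReal.ofReal m := by
      calc ENNReal.ofReal M * ν A = ∫⁻ _ in A, ENNReal.ofReal M ∂ν := by
            rw [setLIntegral_const]
        _ ≤ ∫⁻ p in A, ENNReal.ofReal (φ p) ∂ν := by
            refine setLIntegral_mono (hφmeas.ennreal_ofReal) ?_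
            intro p hp
            exact ENNReal.ofReal_le_ofReal (hL p.1 hp.1 p.2.1 hp.2 p.2.2)
        _ ≤ ∫⁻ p, ENNReal.ofReal (φ p) ∂ν := setLIntegral_le_lintegral _ _
        _ ≤ ENNReal.ofReal m := hνint
    have hdiv : ν A ≤ ENNReal.ofReal m / ENNReal.ofReal M := by
      rw [ENNReal.le_div_iff_mul_le (Or.inl (ENNReal.ofReal_pos.mpr hMpos).ne')
        (Or.inl ENNReal.ofReal_ne_top)]
      rw [mul_comm]
      exact key
    refine hdiv.trans ?_
    rw [← ENNReal.ofReal_div_of_pos hMpos]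
    apply ENNReal.ofReal_le_ofReal
    rw [hMdef]
    rw [div_div_eq_mul_div]
    rw [div_le_iff₀ (by linarith)]
    ring_nf
    nlinarith
  calc ν ((fun p : E₁ × E₂ × E₃ => (p.1, p.2.1)) ⁻¹' (K₁ ×ˢ L)ᶜ)
      ≤ ν ({p : E₁ × E₂ × E₃ | p.1 ∉ K₁} ∪ {p : E₁ × E₂ × E₃ | p.1 ∈ K₁ ∧ p.2.1 ∉ L}) :=
        measure_mono hsub
    _ ≤ ν {p : E₁ × E₂ × E₃ | p.1 ∉ K₁} + ν {p : E₁ × E₂ × E₃ | p.1 ∈ K₁ ∧ p.2.1 ∉ L} :=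
        measure_union_le _ _
    _ ≤ ENNReal.ofReal (ε / 2) + ENNReal.ofReal (ε / 2) := add_le_add h1 h2
    _ = ENNReal.ofReal ε := by
        rw [← ENNReal.ofReal_add (by linarith) (by linarith)]
        norm_num
end

section
/- Let X, U be locally compact Polish spaces and μ a probability measure on X. If γ is a μ-stochastic kernel from X to U (so x ↦ γ(x)(D) is measurable for all Borel D and γ(x) ∈ P(U) for all x), then for every f ∈ L₁(μ, C₀(U)) the map x ↦ ∫_U f(x)(u) γ(x)(du) is measurable and μ-integrable, and the functional f ↦ ∫_X ∫_U f(x)(u) γ(x)(du) μ(dx) is a continuous linear functional on L₁(μ, C₀(U)) of norm at most 1. -/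
/-!
Evaluation `(x, u) ↦ f x u` of a strongly measurable `C₀(U)`-valued map is jointly strongly
measurable (through the isometric embedding `C₀(U) → Cᵇ(U)`, `U` being second countable and
metrizable), so `x ↦ ∫ f x dγ(x)` is measurable by the measurability of kernel integrals. As each
`γ x` is a probability measure, `‖∫ f x dγ(x)‖ ≤ ‖f x‖_∞`; this domination gives integrability and
the norm bound, and linearity holds pointwise in `x`.
-/

open MeasureTheory ProbabilityTheory TopologicalSpace

namespace ZeroAtInftyContinuousMap

variable {U E : Type*} [TopologicalSpace U] [MeasurableSpace U] [NormedAddCommGroup E]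

theorem stronglyMeasurable_uncurry [PseudoMetrizableSpace U] [SecondCountableTopology U]
    [OpensMeasurableSpace U] {X : Type*} [MeasurableSpace X] {F : X → ZeroAtInftyContinuousMap U E}
    (hF : StronglyMeasurable F) : StronglyMeasurable fun p : X × U => F p.1 p.2 :=
  (continuous_eval (F := BoundedContinuousFunction U E)).comp_stronglyMeasurable
    ((isometry_toBCF.continuous.comp_stronglyMeasurable (hF.comp_measurable measurable_fst)).prodMk
      (stronglyMeasurable_id.comp_measurable measurable_snd))

variable [OpensMeasurableSpace U] [SecondCountableTopology E] [MeasurableSpace E] [BorelSpace E]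

theorem integrable (ν : Measure U) [IsFiniteMeasure ν] (f : ZeroAtInftyContinuousMap U E) :
    Integrable f ν :=
  f.toBCF.integrable ν

variable [NormedSpace ℝ E]

theorem norm_integral_le_norm (ν : Measure U) [IsProbabilityMeasure ν]
    (f : ZeroAtInftyContinuousMap U E) : ‖∫ u, f u ∂ν‖ ≤ ‖f‖ :=
  norm_toBCF_eq_norm (f := f) ▸ f.toBCF.norm_integral_le_norm ν

theorem integral_smul_add_smul (ν : Measure U) [IsFiniteMeasure ν] (a b : ℝ)
    (f g : ZeroAtInftyContinuousMap U E) :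
    ∫ u, (a • f + b • g) u ∂ν = a • ∫ u, f u ∂ν + b • ∫ u, g u ∂ν := by
  simp only [coe_add, coe_smul, Pi.add_apply, Pi.smul_apply]
  rw [integral_add, integral_smul, integral_smul]
  exacts [(f.integrable ν).smul a, (g.integrable ν).smul b]

end ZeroAtInftyContinuousMap

section KernelIntegral

variable {X U E : Type*} [MeasurableSpace X] [TopologicalSpace U] [MeasurableSpace U]
  [NormedAddCommGroup E] [NormedSpace ℝ E] {μ : Measure X} {κ : Kernel X U}
  {F G : X → ZeroAtInftyContinuousMap U E}

theorem aestronglyMeasurable_integral_kernel_zeroAtInfty [PseudoMetrizableSpace U]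
    [SecondCountableTopology U] [OpensMeasurableSpace U] [IsSFiniteKernel κ]
    (hF : AEStronglyMeasurable F μ) : AEStronglyMeasurable (fun x => ∫ u, F x u ∂κ x) μ := by
  refine ⟨fun x => ∫ u, hF.mk F x u ∂κ x, ?_, ?_⟩
  · exact (ZeroAtInftyContinuousMap.stronglyMeasurable_uncurry
      hF.stronglyMeasurable_mk).integral_kernel_prod_right'
  · filter_upwards [hF.ae_eq_mk] with x hx
    rw [hx]

variable [OpensMeasurableSpace U] [SecondCountableTopology E] [MeasurableSpace E] [BorelSpace E]

theorem integral_integral_kernel_smul_add_smul [IsFiniteKernel κ]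
    (hFκ : Integrable (fun x => ∫ u, F x u ∂κ x) μ)
    (hGκ : Integrable (fun x => ∫ u, G x u ∂κ x) μ) (a b : ℝ) :
    ∫ x, ∫ u, (a • F x + b • G x) u ∂κ x ∂μ =
      a • ∫ x, ∫ u, F x u ∂κ x ∂μ + b • ∫ x, ∫ u, G x u ∂κ x ∂μ := by
  simp only [ZeroAtInftyContinuousMap.integral_smul_add_smul]
  rw [integral_add, integral_smul, integral_smul]
  exacts [hFκ.smul a, hGκ.smul b]

variable [IsMarkovKernel κ]

theorem integrable_integral_kernel_zeroAtInfty [PseudoMetrizableSpace U]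
    [SecondCountableTopology U] (hF : AEStronglyMeasurable F μ)
    (hF_int : Integrable (fun x => ‖F x‖) μ) : Integrable (fun x => ∫ u, F x u ∂κ x) μ :=
  hF_int.mono' (aestronglyMeasurable_integral_kernel_zeroAtInfty hF)
    (.of_forall fun x => (F x).norm_integral_le_norm (κ x))

theorem norm_integral_integral_kernel_le (hF_int : Integrable (fun x => ‖F x‖) μ) :
    ‖∫ x, ∫ u, F x u ∂κ x ∂μ‖ ≤ ∫ x, ‖F x‖ ∂μ :=
  norm_integral_le_of_norm_le hF_int (.of_forall fun x => (F x).norm_integral_le_norm (κ x))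

end KernelIntegral

theorem stmt_18_general {X : Type*}
    [MeasurableSpace X]
    {U : Type*} [TopologicalSpace U] [PolishSpace U]
    [MeasurableSpace U] [BorelSpace U]
    (μ : Measure X)
    (γ : X → Measure U)
    (hγmeas : ∀ D : Set U, MeasurableSet D → Measurable fun x => γ x D)
    (hγprob : ∀ x, IsProbabilityMeasure (γ x)) :
    ∀ f : X → ZeroAtInftyContinuousMap U ℝ,
      AEStronglyMeasurable f μ → Integrable (fun x => ‖f x‖) μ →
      (AEStronglyMeasurable (fun x => ∫ u, f x u ∂(γ x)) μ ∧
       Integrable (fun x => ∫ u, f x u ∂(γ x)) μ ∧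
       |∫ x, ∫ u, f x u ∂(γ x) ∂μ| ≤ ∫ x, ‖f x‖ ∂μ) ∧
      (∀ g : X → ZeroAtInftyContinuousMap U ℝ,
        AEStronglyMeasurable g μ → Integrable (fun x => ‖g x‖) μ →
        ∀ a b : ℝ,
          ∫ x, ∫ u, (a • f x + b • g x) u ∂(γ x) ∂μ =
            a * (∫ x, ∫ u, f x u ∂(γ x) ∂μ) + b * (∫ x, ∫ u, g x u ∂(γ x) ∂μ)) := by
  let κ : Kernel X U := ⟨γ, Measure.measurable_of_measurable_coe γ hγmeas⟩
  have : IsMarkovKernel κ := ⟨hγprob⟩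
  intro f hf hf_int
  have hf_kernel : Integrable (fun x => ∫ u, f x u ∂κ x) μ :=
    integrable_integral_kernel_zeroAtInfty hf hf_int
  refine ⟨⟨aestronglyMeasurable_integral_kernel_zeroAtInfty (κ := κ) hf, hf_kernel,
    norm_integral_integral_kernel_le (κ := κ) hf_int⟩, fun g hg hg_int a b => ?_⟩
  exact integral_integral_kernel_smul_add_smul (κ := κ) hf_kernel
    (integrable_integral_kernel_zeroAtInfty hg hg_int) a b

theorem stmt_18 {X : Type*} [TopologicalSpace X] [PolishSpace X] [LocallyCompactSpace X]
    [MeasurableSpace X] [BorelSpace X]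
    {U : Type*} [TopologicalSpace U] [PolishSpace U] [LocallyCompactSpace U]
    [MeasurableSpace U] [BorelSpace U]
    (μ : Measure X) [IsProbabilityMeasure μ]
    (γ : X → Measure U)
    (hγmeas : ∀ D : Set U, MeasurableSet D → Measurable fun x => γ x D)
    (hγprob : ∀ x, IsProbabilityMeasure (γ x)) :
    ∀ f : X → ZeroAtInftyContinuousMap U ℝ,
      AEStronglyMeasurable f μ → Integrable (fun x => ‖f x‖) μ →
      (AEStronglyMeasurable (fun x => ∫ u, f x u ∂(γ x)) μ ∧
       Integrable (fun x => ∫ u, f x u ∂(γ x)) μ ∧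
       |∫ x, ∫ u, f x u ∂(γ x) ∂μ| ≤ ∫ x, ‖f x‖ ∂μ) ∧
      (∀ g : X → ZeroAtInftyContinuousMap U ℝ,
        AEStronglyMeasurable g μ → Integrable (fun x => ‖g x‖) μ →
        ∀ a b : ℝ,
          ∫ x, ∫ u, (a • f x + b • g x) u ∂(γ x) ∂μ =
            a * (∫ x, ∫ u, f x u ∂(γ x) ∂μ) + b * (∫ x, ∫ u, g x u ∂(γ x) ∂μ)) :=
  stmt_18_general μ γ hγmeas hγprob
end

section
/- Let X, Y, U be Polish spaces (Y, U locally compact), μ₀ a probability measure on X, μ a probability measure on Y, and M : X → P(Y × U) a stochastic kernel such that the Y-marginal of M(x) equals μ for every x. Then there exists a stochastic kernel q : X × Y → P(U) such that M(x)(dy,du) = q(x,y)(du) μ(dy) for all x; i.e., the kernel admits a measurable disintegration over its fixed marginal. -/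
/-!
Since `U` is standard Borel and `Y` countably generated, the conditional kernel
`κ.condKernel : Kernel (X × Y) U` of `κ x = M x` disintegrates `κ` over its first marginal,
jointly measurably in `(x, y)`. That marginal is the fixed measure `μ`, and a composition-product
`μ ⊗ₘ η` is the mixture under `μ` of the measures `(η y).map (Prod.mk y)`.
-/

open MeasureTheory ProbabilityTheory

lemma MeasureTheory.Measure.compProd_eq_bind_map_prodMk {α β : Type*} [MeasurableSpace α]
    [MeasurableSpace β] (μ : Measure α) [SFinite μ] (η : Kernel α β) [IsSFiniteKernel η] :
    μ ⊗ₘ η = μ.bind fun a => (η a).map (Prod.mk a) := by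
  rw [Measure.compProd_eq_comp_prod]
  congr 1
  ext1 a
  rw [Kernel.prod_apply, Kernel.id_apply, Measure.dirac_prod]

lemma ProbabilityTheory.Kernel.apply_eq_bind_map_condKernel {α β Ω : Type*} [MeasurableSpace α]
    [MeasurableSpace β] [MeasurableSpace Ω] [StandardBorelSpace Ω] [Nonempty Ω]
    [MeasurableSpace.CountableOrCountablyGenerated α β]
    (κ : Kernel α (β × Ω)) [IsFiniteKernel κ] (a : α) :
    κ a = (κ.fst a).bind fun b => (κ.condKernel (a, b)).map (Prod.mk b) := by
  conv_lhs => rw [← κ.disintegrate κ.condKernel]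
  rw [Kernel.compProd_apply_eq_compProd_sectR, Measure.compProd_eq_bind_map_prodMk]
  rfl

theorem stmt_19_general {X : Type*}
    [MeasurableSpace X]
    {Y : Type*} [TopologicalSpace Y] [PolishSpace Y]
    [MeasurableSpace Y] [BorelSpace Y]
    {U : Type*} [TopologicalSpace U] [PolishSpace U]
    [MeasurableSpace U] [BorelSpace U]
    (μ : Measure Y)
    (M : X → Measure (Y × U))
    (hMmeas : Measurable M)
    (hMprob : ∀ x, IsProbabilityMeasure (M x))
    (hMmarg : ∀ x, (M x).map Prod.fst = μ) :
    ∃ q : X × Y → Measure U,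
      Measurable q ∧
      (∀ p, IsProbabilityMeasure (q p)) ∧
      ∀ x, M x = μ.bind fun y => (q (x, y)).map (Prod.mk y) := by
  rcases isEmpty_or_nonempty X with hX | ⟨⟨x₀⟩⟩
  · exact ⟨fun p => isEmptyElim p.1, Subsingleton.measurable,
      fun p => isEmptyElim p.1, fun x => isEmptyElim x⟩
  have : Nonempty U := ⟨(nonempty_of_isProbabilityMeasure (M x₀)).some.2⟩
  let κ : Kernel X (Y × U) := ⟨M, hMmeas⟩
  have : IsMarkovKernel κ := ⟨hMprob⟩
  refine ⟨κ.condKernel, κ.condKernel.measurable, fun p => inferInstance, fun x => ?_⟩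
  rw [← hMmarg x]
  exact κ.apply_eq_bind_map_condKernel x

theorem stmt_19 {X : Type*} [TopologicalSpace X] [PolishSpace X]
    [MeasurableSpace X] [BorelSpace X]
    {Y : Type*} [TopologicalSpace Y] [PolishSpace Y] [LocallyCompactSpace Y]
    [MeasurableSpace Y] [BorelSpace Y]
    {U : Type*} [TopologicalSpace U] [PolishSpace U] [LocallyCompactSpace U]
    [MeasurableSpace U] [BorelSpace U]
    (μ₀ : Measure X) [IsProbabilityMeasure μ₀]
    (μ : Measure Y) [IsProbabilityMeasure μ]
    (M : X → Measure (Y × U))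
    (hMmeas : Measurable M)
    (hMprob : ∀ x, IsProbabilityMeasure (M x))
    (hMmarg : ∀ x, (M x).map Prod.fst = μ) :
    ∃ q : X × Y → Measure U,
      Measurable q ∧
      (∀ p, IsProbabilityMeasure (q p)) ∧
      ∀ x, M x = μ.bind fun y => (q (x, y)).map (Prod.mk y) :=
  stmt_19_general μ M hMmeas hMprob hMmarg
end
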